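/- arXiv:1910.12340 — 4 statements merged into one kernel-verified Lean document; each statement's English description precedes it below -/
import Mathlib

section
/- Let G be a series-parallel graph recursively built from single edges via series and parallel combinations, and for each component H let s(H) = min(p, size of the largest edge-antichain in H). Then the number of parallel combinations (G₁,G₂) in the recursive construction with s(G₁) = s(G₂) = p is at most |E|/p. -/
/-- Series-parallel DAGs, represented by their recursive construction from
single edges via series and parallel combinations. -/
inductive SP where
  | edge : SP
  | series : SP → SP → SP
  | parallel : SP → SP → SP

/-- Number of edges of a series-parallel DAG. -/
def SP.edges : SP → ℕ
  | .edge => 1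
  | .series a b => a.edges + b.edges
  | .parallel a b => a.edges + b.edges

/-- s(H) = min(p, size of the largest edge-antichain of H): a single edge has
antichain size 1; a series combination takes the max; a parallel combination
takes the (capped) sum. -/
def SP.s (p : ℕ) : SP → ℕ
  | .edge => min 1 p
  | .series a b => max (a.s p) (b.s p)
  | .parallel a b => min (a.s p + b.s p) p

/-- Number of fully-formed parallel combinations, i.e. parallel combinations
(G₁,G₂) in the recursive construction with s(G₁) = s(G₂) = p. -/
def SP.ffCount (p : ℕ) : SP → ℕ
  | .edge => 0
  | .series a b => a.ffCount p + b.ffCount p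
  | .parallel a b => a.ffCount p + b.ffCount p + (if a.s p = p ∧ b.s p = p then 1 else 0)

/-! The count is bounded together with `s`: `p · ffCount G + s G ≤ |E|`. A fully formed parallel
combination joins two parts with `s = p` into one with `s = p`, so the `p` units of budget held by
one of the parts pay for the new combination. -/

theorem SP.mul_ffCount_add_s_le_edges (p : ℕ) (G : SP) :
    p * G.ffCount p + G.s p ≤ G.edges := by
  induction G with
  | edge => simp [SP.ffCount, SP.s, SP.edges]
  | series a b iha ihb =>
      simp only [SP.ffCount, SP.s, SP.edges, Nat.mul_add]
      omega
  | parallel a b iha ihb =>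
      simp only [SP.ffCount, SP.s, SP.edges, Nat.mul_add]
      split <;> omega

theorem stmt3_general (p : ℕ) (G : SP) :
    p * G.ffCount p ≤ G.edges :=
  (Nat.le_add_right _ _).trans (G.mul_ffCount_add_s_le_edges p)

/-- The number of fully-formed parallel combinations in the recursive
construction of G is at most |E|/p. -/
theorem stmt3 (p : ℕ) (hp : 0 < p) (G : SP) :
    p * G.ffCount p ≤ G.edges :=
  stmt3_general p G
end

section
/- Let G = (V,E) be a series-parallel DAG built recursively via series and parallel combinations, and let 𝒞 be the multiset of parallel combinations (G₁,G₂) in the construction with min(s(G₁),s(G₂)) < p, where s(H) = min(p, max antichain size of H). Then ∑_{(G₁,G₂)∈𝒞} s(G₁)·s(G₂) ≤ (2p−1)·|E|. -/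
/-- Sum of s(G₁)·s(G₂) over all non-fully-formed parallel combinations
(those with min(s(G₁),s(G₂)) < p) in the recursive construction. -/
def SP.nfCost (p : ℕ) : SP → ℕ
  | .edge => 0
  | .series a b => a.nfCost p + b.nfCost p
  | .parallel a b => a.nfCost p + b.nfCost p +
      (if min (a.s p) (b.s p) < p then a.s p * b.s p else 0)

/-!
Amortize with `2p - 1` credits per edge. As long as `s(H) < p`, the combinations inside `H` cost
at most `s(H)` per edge of `H`: `s` is a maximum under series combinations, and a parallel
combination with `s(G₁) + s(G₂) < p` can charge `s(G₂)` to each edge of `G₁` and `s(G₁)` to each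
edge of `G₂`. A charged parallel combination with `s(G₁) < p` is paid by the edges of `G₁` alone,
`s(G₂) ≤ p` each on top of the at most `s(G₁) ≤ p - 1` they spent inside `G₁`.
-/

namespace SP

variable {p : ℕ}

lemma s_le (p : ℕ) : ∀ G : SP, G.s p ≤ p
  | .edge => min_le_right _ _
  | .series a b => max_le (a.s_le p) (b.s_le p)
  | .parallel _ _ => min_le_right _ _

lemma s_le_edges (p : ℕ) : ∀ G : SP, G.s p ≤ G.edges
  | .edge => min_le_left _ _
  | .series a b => max_le ((a.s_le_edges p).trans (Nat.le_add_right _ _))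
      ((b.s_le_edges p).trans (Nat.le_add_left _ _))
  | .parallel a b => (min_le_left _ _).trans (Nat.add_le_add (a.s_le_edges p) (b.s_le_edges p))

lemma nfCost_le_s_mul_edges {G : SP} (hG : G.s p < p) : G.nfCost p ≤ G.s p * G.edges := by
  induction G with
  | edge => simp [nfCost]
  | series a b iha ihb =>
    obtain ⟨ha, hb⟩ := max_lt_iff.mp hG
    calc a.nfCost p + b.nfCost p ≤ a.s p * a.edges + b.s p * b.edges :=
          add_le_add (iha ha) (ihb hb)
      _ ≤ max (a.s p) (b.s p) * (a.edges + b.edges) := by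
        rw [Nat.mul_add]
        exact add_le_add (Nat.mul_le_mul_right _ (le_max_left _ _))
          (Nat.mul_le_mul_right _ (le_max_right _ _))
  | parallel a b iha ihb =>
    have hab : a.s p + b.s p < p := by simpa [s] using hG
    have hmin : min (a.s p) (b.s p) < p := by omega
    simp only [nfCost, s, edges, if_pos hmin, min_eq_left hab.le]
    have hcost : a.s p * b.s p ≤ a.s p * b.edges := Nat.mul_le_mul_left _ (b.s_le_edges p)
    nlinarith [iha (by omega), ihb (by omega)]

lemma nfCost_add_mul_le (b : SP) {a : SP} (ha : a.s p < p) :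
    a.nfCost p + a.s p * b.s p ≤ (2 * p - 1) * a.edges :=
  calc a.nfCost p + a.s p * b.s p ≤ (p - 1) * a.edges + a.edges * p :=
        add_le_add ((nfCost_le_s_mul_edges ha).trans (Nat.mul_le_mul_right _ (by omega)))
          (Nat.mul_le_mul (a.s_le_edges p) (b.s_le p))
    _ = (2 * p - 1) * a.edges := by
        rw [mul_comm a.edges, ← Nat.add_mul]
        congr 1
        omega

end SP

theorem stmt4_general (p : ℕ) (G : SP) :
    G.nfCost p ≤ (2 * p - 1) * G.edges := by
  induction G with
  | edge => simp [SP.nfCost]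
  | series a b iha ihb => simpa only [SP.nfCost, SP.edges, Nat.mul_add] using add_le_add iha ihb
  | parallel a b iha ihb =>
    simp only [SP.nfCost, SP.edges, Nat.mul_add]
    split_ifs with hmin
    · rcases min_lt_iff.mp hmin with ha | hb
      · linarith [SP.nfCost_add_mul_le b ha]
      · linarith [SP.nfCost_add_mul_le a hb, Nat.mul_comm (a.s p) (b.s p)]
    · linarith

/-- Over the non-fully-formed parallel combinations of the construction of G,
∑ s(G₁)·s(G₂) ≤ (2p−1)·|E|. -/
theorem stmt4 (p : ℕ) (hp : 0 < p) (G : SP) :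
    G.nfCost p ≤ (2 * p - 1) * G.edges :=
  stmt4_general p G
end

section
/- Let A₁ be an antichain of size q ≤ p in a series-parallel computation DAG with water-mark function W, such that A₁ is not stripped robust. Then there exists a stripped robust antichain A_k ⊆ A₁ (possibly empty) with W(A_k) ≥ W(A₁) − M/2. -/
open Finset

/-- Greedy descent: each step removes at least one element, so at most `#A` steps occur. -/
theorem exists_subset_of_ssubset_step {E : Type*} {Admissible Good : Finset E → Prop}
    {W : Finset E → ℝ} {δ : ℝ} (hδ : 0 ≤ δ)
    (hStep : ∀ A, Admissible A → ¬ Good A → ∃ A' ⊂ A, Admissible A' ∧ W A - δ ≤ W A')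
    (A : Finset E) (hA : Admissible A) :
    ∃ B ⊆ A, Admissible B ∧ Good B ∧ W A - #A * δ ≤ W B := by
  induction A using Finset.strongInduction with
  | H A ih =>
    by_cases hGood : Good A
    · exact ⟨A, subset_rfl, hA, hGood, by nlinarith [(#A).cast_nonneg (α := ℝ)]⟩
    obtain ⟨A', hA'A, hA', hWA'⟩ := hStep A hA hGood
    obtain ⟨B, hBA', hB, hGoodB, hWB⟩ := ih A' hA'A hA'
    have hcard : (#A' : ℝ) + 1 ≤ #A := by exact_mod_cast card_lt_card hA'A
    exact ⟨B, hBA'.trans hA'A.subset, hB, hGoodB, by nlinarith⟩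

theorem natCast_mul_div_two_mul_le {q p : ℕ} (hqp : q ≤ p) {M : ℝ} (hM : 0 ≤ M) :
    q * (M / (2 * p)) ≤ M / 2 :=
  calc q * (M / (2 * p)) = (q / p : ℝ) * (M / 2) := by ring
    _ ≤ M / 2 :=
      mul_le_of_le_one_left (by positivity) (div_le_one_of_le₀ (by exact_mod_cast hqp) p.cast_nonneg)

theorem stmt6_general {E : Type*}
    (M : ℝ) (hM : 0 < M) (p : ℕ)
    (Antichain StrippedRobust : Finset E → Prop)
    (W : Finset E → ℝ)
    (hStep : ∀ A : Finset E, Antichain A → ¬ StrippedRobust A →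
      ∃ A', A' ⊂ A ∧ Antichain A' ∧ W A' ≥ W A - M / (2 * p))
    (A₁ : Finset E) (hA : Antichain A₁) (hq : A₁.card ≤ p) :
    ∃ B ⊆ A₁, Antichain B ∧ StrippedRobust B ∧ W B ≥ W A₁ - M / 2 := by
  obtain ⟨B, hBA, hB, hRobust, hWB⟩ :=
    exists_subset_of_ssubset_step (W := W) (δ := M / (2 * p)) (by positivity)
      (fun A hA hA' ↦ by simpa only [exists_prop, ge_iff_le] using hStep A hA hA') A₁ hA
  exact ⟨B, hBA, hB, hRobust, by linarith [natCast_mul_div_two_mul_le hq hM.le]⟩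

/-- Let A₁ be an antichain of size q ≤ p that is not stripped robust. The
empty antichain is stripped robust, and whenever an antichain is not stripped
robust, removing a low-contribution edge or the edges in a low-contribution
non-critical component yields a strictly smaller antichain losing at most
M/(2p) of water mark. Then there is a stripped robust antichain B ⊆ A₁
(possibly empty) with W(B) ≥ W(A₁) − M/2. -/
theorem stmt6 {E : Type*} [DecidableEq E]
    (M : ℝ) (hM : 0 < M) (p : ℕ) (hp : 0 < p)
    (Antichain StrippedRobust : Finset E → Prop)
    (W : Finset E → ℝ)
    (hEmpty : StrippedRobust ∅)
    (hStep : ∀ A : Finset E, Antichain A → ¬ StrippedRobust A →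
      ∃ A', A' ⊂ A ∧ Antichain A' ∧ W A' ≥ W A - M / (2 * p))
    (A₁ : Finset E) (hA : Antichain A₁) (hq : A₁.card ≤ p)
    (hnr : ¬ StrippedRobust A₁) :
    ∃ B ⊆ A₁, Antichain B ∧ StrippedRobust B ∧ W B ≥ W A₁ - M / 2 :=
  stmt6_general M hM p Antichain StrippedRobust W hStep A₁ hA hq
end

section
/- In the recursive computation of the infinite-processor robust high-water mark under parallel combination of C₁ and C₂ into C: the maximum water mark over robust antichains of size > 1 in C equals the maximum of (i) m̄₁ + m̄₂, (ii) max(m̄₁, r₁, t₁, 0) + r₂, and (iii) max(m̄₂, r₂, t₂, 0) + r₁, where for j ∈ {1,2}: t_j = ∑_{e∈C_j} t(e); r_j is the maximum robust multi-edge water mark in C_j (−∞ if none); and m̄_j equals the maximum single-edge water mark in C_j if it exceeds M/(2p), else −∞. -/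
/-!
A robust antichain of the parallel combination with at least two edges is a disjoint union
`X ⊕ Y` of robust-or-empty antichains of the two components. Sorting by the sizes of `X` and
`Y` bounds its water mark by one of the three terms: two singletons give (i), `Y` with at
least two edges gives (ii), `X` with at least two edges and `Y` a singleton gives (iii), and
an empty side is charged its companion contribution. Conversely, every pair of antichains
that occurs in one of the three terms combines to a robust multi-edge antichain of the
combination, so each term is a lower bound; in `EReal` a supremum of sums splits into a sum
of suprema, with `⊥` absorbing the case where one side has no robust antichain.
-/

open Finset

theorem Finset.image_inl_union_image_inr {α β : Type*} [DecidableEq α] [DecidableEq β]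
    (s : Finset α) (t : Finset β) : s.image Sum.inl ∪ t.image Sum.inr = s.disjSum t := by
  ext x
  simp [mem_disjSum]

theorem EReal.sSup_add_sSup_le {S T : Set EReal} {c : EReal}
    (h : ∀ a ∈ S, ∀ b ∈ T, a + b ≤ c) : sSup S + sSup T ≤ c := by
  refine EReal.add_le_of_forall_lt fun a' ha' b' hb' => ?_
  obtain ⟨a, ha, ha'a⟩ := lt_sSup_iff.1 ha'
  obtain ⟨b, hb, hb'b⟩ := lt_sSup_iff.1 hb'
  exact (add_le_add ha'a.le hb'b.le).trans (h a ha b hb)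

theorem EReal.add_sSup_le {a : EReal} {T : Set EReal} {c : EReal}
    (h : ∀ b ∈ T, a + b ≤ c) : a + sSup T ≤ c := by
  simpa using EReal.sSup_add_sSup_le (S := {a}) (by simpa using h)

section Marks

variable {E : Type*} (Rob : Finset E → Prop) (W : Finset E → ℝ)

def singleMarks : Set EReal := {w | ∃ x : E, Rob {x} ∧ w = (W {x} : EReal)}

def multiMarks : Set EReal := {w | ∃ A, Rob A ∧ 1 < A.card ∧ w = (W A : EReal)}

def robustMarks : Set EReal := {w | ∃ A, Rob A ∧ A.Nonempty ∧ w = (W A : EReal)}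

theorem singleMarks_union_multiMarks :
    singleMarks Rob W ∪ multiMarks Rob W = robustMarks Rob W := by
  ext w
  constructor
  · rintro (⟨x, hx, rfl⟩ | ⟨A, hA, hA2, rfl⟩)
    · exact ⟨{x}, hx, singleton_nonempty x, rfl⟩
    · exact ⟨A, hA, card_pos.1 (by omega), rfl⟩
  · rintro ⟨A, hA, hAne, rfl⟩
    obtain ⟨x, rfl⟩ | hA2 := hAne.exists_eq_singleton_or_nontrivial
    · exact .inl ⟨x, hA, rfl⟩
    · exact .inr ⟨A, hA, one_lt_card_iff_nontrivial.2 hA2, rfl⟩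

theorem max_sSup_singleMarks_sSup_multiMarks :
    max (sSup (singleMarks Rob W)) (sSup (multiMarks Rob W)) = sSup (robustMarks Rob W) := by
  rw [← singleMarks_union_multiMarks, sSup_union]

end Marks

/-- `u₁` (resp. `u₂`) is the water mark contributed by `C₁` (resp. `C₂`) to an antichain
that contains none of its edges. -/
structure IsParallelCombination {E₁ E₂ : Type*} (u₁ u₂ : ℝ)
    (Rob₁ : Finset E₁ → Prop) (Rob₂ : Finset E₂ → Prop) (RobC : Finset (E₁ ⊕ E₂) → Prop)
    (W₁ : Finset E₁ → ℝ) (W₂ : Finset E₂ → ℝ) (WC : Finset (E₁ ⊕ E₂) → ℝ) : Prop where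
  decomp : ∀ C, RobC C → ∃ X Y, C = X.disjSum Y ∧ (X = ∅ ∨ Rob₁ X) ∧ (Y = ∅ ∨ Rob₂ Y)
  combine : ∀ X Y, (X = ∅ ∨ Rob₁ X) → (Y = ∅ ∨ Rob₂ Y) → 1 < X.card + Y.card →
    RobC (X.disjSum Y)
  wc_disjSum : ∀ X Y, X.Nonempty → Y.Nonempty → WC (X.disjSum Y) = W₁ X + W₂ Y
  wc_disjSum_empty : ∀ X, X.Nonempty → WC (X.disjSum ∅) = W₁ X + u₂
  wc_empty_disjSum : ∀ Y, Y.Nonempty → WC ((∅ : Finset E₁).disjSum Y) = u₁ + W₂ Y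

namespace IsParallelCombination

variable {E₁ E₂ : Type*} {u₁ u₂ : ℝ} {Rob₁ : Finset E₁ → Prop} {Rob₂ : Finset E₂ → Prop}
  {RobC : Finset (E₁ ⊕ E₂) → Prop} {W₁ : Finset E₁ → ℝ} {W₂ : Finset E₂ → ℝ}
  {WC : Finset (E₁ ⊕ E₂) → ℝ}

theorem coe_add_mem_multiMarks (h : IsParallelCombination u₁ u₂ Rob₁ Rob₂ RobC W₁ W₂ WC)
    {X : Finset E₁} {Y : Finset E₂} (hX : Rob₁ X) (hY : Rob₂ Y) (hXne : X.Nonempty)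
    (hYne : Y.Nonempty) : (W₁ X : EReal) + W₂ Y ∈ multiMarks RobC WC := by
  have hcard : 1 < X.card + Y.card := by
    have := card_pos.2 hXne
    have := card_pos.2 hYne
    omega
  refine ⟨X.disjSum Y, h.combine X Y (.inr hX) (.inr hY) hcard, ?_, ?_⟩
  · rwa [card_disjSum]
  · rw [h.wc_disjSum X Y hXne hYne, EReal.coe_add]

theorem coe_add_u₂_mem_multiMarks (h : IsParallelCombination u₁ u₂ Rob₁ Rob₂ RobC W₁ W₂ WC)
    {X : Finset E₁} (hX : Rob₁ X) (hX2 : 1 < X.card) :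
    (W₁ X : EReal) + u₂ ∈ multiMarks RobC WC := by
  refine ⟨X.disjSum ∅, h.combine X ∅ (.inr hX) (.inl rfl) (by simpa using hX2), ?_, ?_⟩
  · simpa using hX2
  · rw [h.wc_disjSum_empty X (card_pos.1 (by omega)), EReal.coe_add]

theorem coe_u₁_add_mem_multiMarks (h : IsParallelCombination u₁ u₂ Rob₁ Rob₂ RobC W₁ W₂ WC)
    {Y : Finset E₂} (hY : Rob₂ Y) (hY2 : 1 < Y.card) :
    (u₁ : EReal) + W₂ Y ∈ multiMarks RobC WC := by
  refine ⟨(∅ : Finset E₁).disjSum Y, h.combine ∅ Y (.inl rfl) (.inr hY) (by simpa using hY2),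
    ?_, ?_⟩
  · simpa using hY2
  · rw [h.wc_empty_disjSum Y (card_pos.1 (by omega)), EReal.coe_add]

theorem sSup_singleMarks_add_sSup_singleMarks_le
    (h : IsParallelCombination u₁ u₂ Rob₁ Rob₂ RobC W₁ W₂ WC) :
    sSup (singleMarks Rob₁ W₁) + sSup (singleMarks Rob₂ W₂) ≤ sSup (multiMarks RobC WC) := by
  refine EReal.sSup_add_sSup_le ?_
  rintro _ ⟨x, hx, rfl⟩ _ ⟨y, hy, rfl⟩
  exact le_sSup (h.coe_add_mem_multiMarks hx hy (singleton_nonempty x) (singleton_nonempty y))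

theorem max_add_sSup_multiMarks_right_le
    (h : IsParallelCombination u₁ u₂ Rob₁ Rob₂ RobC W₁ W₂ WC) :
    max (sSup (robustMarks Rob₁ W₁)) u₁ + sSup (multiMarks Rob₂ W₂) ≤
      sSup (multiMarks RobC WC) := by
  rw [← max_add_add_right]
  refine max_le (EReal.sSup_add_sSup_le ?_) (EReal.add_sSup_le ?_)
  · rintro _ ⟨X, hX, hXne, rfl⟩ _ ⟨Y, hY, hY2, rfl⟩
    exact le_sSup (h.coe_add_mem_multiMarks hX hY hXne (card_pos.1 (by omega)))
  · rintro _ ⟨Y, hY, hY2, rfl⟩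
    exact le_sSup (h.coe_u₁_add_mem_multiMarks hY hY2)

theorem max_add_sSup_multiMarks_left_le
    (h : IsParallelCombination u₁ u₂ Rob₁ Rob₂ RobC W₁ W₂ WC) :
    max (sSup (robustMarks Rob₂ W₂)) u₂ + sSup (multiMarks Rob₁ W₁) ≤
      sSup (multiMarks RobC WC) := by
  rw [← max_add_add_right]
  refine max_le (EReal.sSup_add_sSup_le ?_) (EReal.add_sSup_le ?_)
  · rintro _ ⟨Y, hY, hYne, rfl⟩ _ ⟨X, hX, hX2, rfl⟩
    rw [add_comm]
    exact le_sSup (h.coe_add_mem_multiMarks hX hY (card_pos.1 (by omega)) hYne)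
  · rintro _ ⟨X, hX, hX2, rfl⟩
    rw [add_comm]
    exact le_sSup (h.coe_add_u₂_mem_multiMarks hX hX2)

theorem sSup_multiMarks_le (h : IsParallelCombination u₁ u₂ Rob₁ Rob₂ RobC W₁ W₂ WC) :
    sSup (multiMarks RobC WC) ≤
      max (sSup (singleMarks Rob₁ W₁) + sSup (singleMarks Rob₂ W₂))
        (max (max (sSup (robustMarks Rob₁ W₁)) u₁ + sSup (multiMarks Rob₂ W₂))
          (max (sSup (robustMarks Rob₂ W₂)) u₂ + sSup (multiMarks Rob₁ W₁))) := by
  refine sSup_le ?_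
  rintro _ ⟨C, hC, hcard, rfl⟩
  obtain ⟨X, Y, rfl, hX, hY⟩ := h.decomp C hC
  rw [card_disjSum] at hcard
  rcases X.eq_empty_or_nonempty with rfl | hXne
  · have hY2 : 1 < Y.card := by simpa using hcard
    have hYR : Rob₂ Y := hY.resolve_left (by rintro rfl; simp at hY2)
    rw [h.wc_empty_disjSum Y (card_pos.1 (by omega)), EReal.coe_add]
    exact le_max_of_le_right <| le_max_of_le_left <|
      add_le_add (le_max_right _ _) (le_sSup ⟨Y, hYR, hY2, rfl⟩)
  rcases Y.eq_empty_or_nonempty with rfl | hYne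
  · have hX2 : 1 < X.card := by simpa using hcard
    have hXR : Rob₁ X := hX.resolve_left hXne.ne_empty
    rw [h.wc_disjSum_empty X hXne, EReal.coe_add, add_comm]
    exact le_max_of_le_right <| le_max_of_le_right <|
      add_le_add (le_max_right _ _) (le_sSup ⟨X, hXR, hX2, rfl⟩)
  have hXR : Rob₁ X := hX.resolve_left hXne.ne_empty
  have hYR : Rob₂ Y := hY.resolve_left hYne.ne_empty
  rw [h.wc_disjSum X Y hXne hYne, EReal.coe_add]
  obtain ⟨y, rfl⟩ | hY2 := hYne.exists_eq_singleton_or_nontrivial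
  · obtain ⟨x, rfl⟩ | hX2 := hXne.exists_eq_singleton_or_nontrivial
    · exact le_max_of_le_left <| add_le_add (le_sSup ⟨x, hXR, rfl⟩) (le_sSup ⟨y, hYR, rfl⟩)
    · rw [add_comm]
      exact le_max_of_le_right <| le_max_of_le_right <|
        add_le_add (le_max_of_le_left (le_sSup ⟨{y}, hYR, hYne, rfl⟩))
          (le_sSup ⟨X, hXR, one_lt_card_iff_nontrivial.2 hX2, rfl⟩)
  · exact le_max_of_le_right <| le_max_of_le_left <|
      add_le_add (le_max_of_le_left (le_sSup ⟨X, hXR, hXne, rfl⟩))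
        (le_sSup ⟨Y, hYR, one_lt_card_iff_nontrivial.2 hY2, rfl⟩)

theorem sSup_multiMarks_eq (h : IsParallelCombination u₁ u₂ Rob₁ Rob₂ RobC W₁ W₂ WC) :
    sSup (multiMarks RobC WC) =
      max (sSup (singleMarks Rob₁ W₁) + sSup (singleMarks Rob₂ W₂))
        (max (max (sSup (robustMarks Rob₁ W₁)) u₁ + sSup (multiMarks Rob₂ W₂))
          (max (sSup (robustMarks Rob₂ W₂)) u₂ + sSup (multiMarks Rob₁ W₁))) :=
  le_antisymm h.sSup_multiMarks_le <| max_le h.sSup_singleMarks_add_sSup_singleMarks_le <|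
    max_le h.max_add_sSup_multiMarks_right_le h.max_add_sSup_multiMarks_left_le

end IsParallelCombination

theorem stmt18_general {E₁ E₂ : Type*}
    [DecidableEq E₁] [DecidableEq E₂]
    (t₁ t₂ : ℝ)
    (Rob₁ : Finset E₁ → Prop) (Rob₂ : Finset E₂ → Prop)
    (RobC : Finset (E₁ ⊕ E₂) → Prop)
    (W₁ : Finset E₁ → ℝ) (W₂ : Finset E₂ → ℝ) (WC : Finset (E₁ ⊕ E₂) → ℝ)
    (hdecomp : ∀ C, RobC C → ∃ X Y,
      C = X.image Sum.inl ∪ Y.image Sum.inr ∧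
      (X = ∅ ∨ Rob₁ X) ∧ (Y = ∅ ∨ Rob₂ Y))
    (hcomb : ∀ X Y, (X = ∅ ∨ Rob₁ X) → (Y = ∅ ∨ Rob₂ Y) →
      1 < X.card + Y.card → RobC (X.image Sum.inl ∪ Y.image Sum.inr))
    (hWne : ∀ (X : Finset E₁) (Y : Finset E₂), X.Nonempty → Y.Nonempty →
      WC (X.image Sum.inl ∪ Y.image Sum.inr) = W₁ X + W₂ Y)
    (hWl : ∀ X : Finset E₁, X.Nonempty →
      WC (X.image Sum.inl) = W₁ X + max t₂ 0)
    (hWr : ∀ Y : Finset E₂, Y.Nonempty →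
      WC (Y.image Sum.inr) = max t₁ 0 + W₂ Y) :
    sSup {w : EReal | ∃ C, RobC C ∧ 1 < C.card ∧ w = (WC C : EReal)}
      = max
          ((sSup {w : EReal | ∃ x : E₁, Rob₁ {x} ∧ w = (W₁ {x} : EReal)}) +
           (sSup {w : EReal | ∃ y : E₂, Rob₂ {y} ∧ w = (W₂ {y} : EReal)}))
          (max
            ((max
                (max (sSup {w : EReal | ∃ x : E₁, Rob₁ {x} ∧ w = (W₁ {x} : EReal)})
                     (sSup {w : EReal | ∃ A, Rob₁ A ∧ 1 < A.card ∧ w = (W₁ A : EReal)}))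
                ((max t₁ 0 : ℝ) : EReal)) +
              sSup {w : EReal | ∃ A, Rob₂ A ∧ 1 < A.card ∧ w = (W₂ A : EReal)})
            ((max
                (max (sSup {w : EReal | ∃ y : E₂, Rob₂ {y} ∧ w = (W₂ {y} : EReal)})
                     (sSup {w : EReal | ∃ A, Rob₂ A ∧ 1 < A.card ∧ w = (W₂ A : EReal)}))
                ((max t₂ 0 : ℝ) : EReal)) +
              sSup {w : EReal | ∃ A, Rob₁ A ∧ 1 < A.card ∧ w = (W₁ A : EReal)})) := by
  simp only [image_inl_union_image_inr] at hdecomp hcomb hWne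
  have h : IsParallelCombination (max t₁ 0) (max t₂ 0) Rob₁ Rob₂ RobC W₁ W₂ WC :=
    { decomp := hdecomp
      combine := hcomb
      wc_disjSum := hWne
      wc_disjSum_empty := fun X hX => by
        rw [← image_inl_union_image_inr, image_empty, union_empty, hWl X hX]
      wc_empty_disjSum := fun Y hY => by
        rw [← image_inl_union_image_inr, image_empty, empty_union, hWr Y hY] }
  have key := h.sSup_multiMarks_eq
  rw [← max_sSup_singleMarks_sSup_multiMarks, ← max_sSup_singleMarks_sSup_multiMarks] at key
  exact key

/-- Parallel-combination recursion for the infinite-processor robust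
high-water mark.  C is the parallel combination of C₁ and C₂ (edge set
E₁ ⊕ E₂).  Every robust antichain of C is the union of a (possibly empty)
robust antichain of C₁ and one of C₂; an empty side contributes max(t_j, 0)
(suspended companion or unexecuted); single-edge antichains are robust iff
their water mark exceeds M/(2p).  With
r_j  = sup of water marks of robust multi-edge antichains of C_j (−∞ if none),
m̄_j = sup of water marks of robust single-edge antichains of C_j (−∞ if none,
      i.e. the max single-edge water mark when it exceeds M/(2p)),
the maximum water mark over robust antichains of size > 1 in C equals
max( m̄₁ + m̄₂, max(m̄₁, r₁, t₁, 0) + r₂, max(m̄₂, r₂, t₂, 0) + r₁ ). -/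
theorem stmt18 {E₁ E₂ : Type*} [Fintype E₁] [Fintype E₂]
    [DecidableEq E₁] [DecidableEq E₂]
    (M : ℝ) (hM : 0 < M) (p : ℕ) (hp : 0 < p)
    (t₁ t₂ : ℝ)
    (Rob₁ : Finset E₁ → Prop) (Rob₂ : Finset E₂ → Prop)
    (RobC : Finset (E₁ ⊕ E₂) → Prop)
    (W₁ : Finset E₁ → ℝ) (W₂ : Finset E₂ → ℝ) (WC : Finset (E₁ ⊕ E₂) → ℝ)
    (hdecomp : ∀ C, RobC C → ∃ X Y,
      C = X.image Sum.inl ∪ Y.image Sum.inr ∧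
      (X = ∅ ∨ Rob₁ X) ∧ (Y = ∅ ∨ Rob₂ Y))
    (hcomb : ∀ X Y, (X = ∅ ∨ Rob₁ X) → (Y = ∅ ∨ Rob₂ Y) →
      1 < X.card + Y.card → RobC (X.image Sum.inl ∪ Y.image Sum.inr))
    (hWne : ∀ (X : Finset E₁) (Y : Finset E₂), X.Nonempty → Y.Nonempty →
      WC (X.image Sum.inl ∪ Y.image Sum.inr) = W₁ X + W₂ Y)
    (hWl : ∀ X : Finset E₁, X.Nonempty →
      WC (X.image Sum.inl) = W₁ X + max t₂ 0)
    (hWr : ∀ Y : Finset E₂, Y.Nonempty →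
      WC (Y.image Sum.inr) = max t₁ 0 + W₂ Y)
    (hsingle₁ : ∀ x : E₁, Rob₁ {x} ↔ M / (2 * p) < W₁ {x})
    (hsingle₂ : ∀ y : E₂, Rob₂ {y} ↔ M / (2 * p) < W₂ {y}) :
    sSup {w : EReal | ∃ C, RobC C ∧ 1 < C.card ∧ w = (WC C : EReal)}
      = max
          ((sSup {w : EReal | ∃ x : E₁, Rob₁ {x} ∧ w = (W₁ {x} : EReal)}) +
           (sSup {w : EReal | ∃ y : E₂, Rob₂ {y} ∧ w = (W₂ {y} : EReal)}))
          (max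
            ((max
                (max (sSup {w : EReal | ∃ x : E₁, Rob₁ {x} ∧ w = (W₁ {x} : EReal)})
                     (sSup {w : EReal | ∃ A, Rob₁ A ∧ 1 < A.card ∧ w = (W₁ A : EReal)}))
                ((max t₁ 0 : ℝ) : EReal)) +
              sSup {w : EReal | ∃ A, Rob₂ A ∧ 1 < A.card ∧ w = (W₂ A : EReal)})
            ((max
                (max (sSup {w : EReal | ∃ y : E₂, Rob₂ {y} ∧ w = (W₂ {y} : EReal)})
                     (sSup {w : EReal | ∃ A, Rob₂ A ∧ 1 < A.card ∧ w = (W₂ A : EReal)}))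
                ((max t₂ 0 : ℝ) : EReal)) +
              sSup {w : EReal | ∃ A, Rob₁ A ∧ 1 < A.card ∧ w = (W₁ A : EReal)})) :=
  stmt18_general t₁ t₂ Rob₁ Rob₂ RobC W₁ W₂ WC hdecomp hcomb hWne hWl hWr
end
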